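/- Given nonzero positive trace class operators S, X on H and T, Y on K, one has S ⊗ T = X ⊗ Y if and only if there exists r > 0 with S = r·X and T = r⁻¹·Y, where necessarily r = tr(S)/tr(X) = tr(Y)/tr(T). In particular, for density operators ρ, τ on H and σ, ω on K, ρ ⊗ σ = τ ⊗ ω if and only if ρ = τ and σ = ω. -/

import Mathlib

noncomputable section

/-- The rank-one operator `|η⟩⟨φ| : ψ ↦ ⟪φ, ψ⟫ • η`. -/
def rankOne {H : Type*} [NormedAddCommGroup H] [InnerProductSpace ℂ H] (η φ : H) :
    H →L[ℂ] H :=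
  (innerSL ℂ φ).smulRight η

/-- A pure state: a rank-one orthogonal projection onto the line spanned by a unit vector. -/
def IsPureState {H : Type*} [NormedAddCommGroup H] [InnerProductSpace ℂ H]
    (P : H →L[ℂ] H) : Prop :=
  ∃ v : H, ‖v‖ = 1 ∧ P = rankOne v v

/-- Abstract trace theory on the bounded operators of a complex Hilbert space: the
trace-class predicate, the trace functional, the trace norm `‖T‖₁ = tr |T|` and the
absolute value `|T| = √(T⋆ T)`, together with their standard properties. -/
structure TraceTheory (H : Type*) [NormedAddCommGroup H] [InnerProductSpace ℂ H]
    [CompleteSpace H] where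
  IsTraceClass : (H →L[ℂ] H) → Prop
  trace : (H →L[ℂ] H) → ℂ
  traceNorm : (H →L[ℂ] H) → ℝ
  opAbs : (H →L[ℂ] H) → (H →L[ℂ] H)
  opAbs_isPositive : ∀ T, ContinuousLinearMap.IsPositive (opAbs T)
  opAbs_mul_self : ∀ T, opAbs T * opAbs T = star T * T
  opAbs_unique : ∀ T R, ContinuousLinearMap.IsPositive R → R * R = star T * T → R = opAbs T
  isTraceClass_iff_abs : ∀ T, IsTraceClass T ↔ IsTraceClass (opAbs T)
  isTraceClass_zero : IsTraceClass 0
  isTraceClass_add : ∀ {S T}, IsTraceClass S → IsTraceClass T → IsTraceClass (S + T)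
  isTraceClass_smul : ∀ (c : ℂ) {T}, IsTraceClass T → IsTraceClass (c • T)
  isTraceClass_star : ∀ {T}, IsTraceClass T → IsTraceClass (star T)
  isTraceClass_mul_left : ∀ (B : H →L[ℂ] H) {T}, IsTraceClass T → IsTraceClass (B * T)
  isTraceClass_mul_right : ∀ (B : H →L[ℂ] H) {T}, IsTraceClass T → IsTraceClass (T * B)
  isTraceClass_rankOne : ∀ η φ : H, IsTraceClass (rankOne η φ)
  trace_add : ∀ {S T}, IsTraceClass S → IsTraceClass T → trace (S + T) = trace S + trace T
  trace_smul : ∀ (c : ℂ) (T : H →L[ℂ] H), trace (c • T) = c * trace T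
  trace_rankOne : ∀ η φ : H, trace (rankOne η φ) = (inner ℂ φ η : ℂ)
  traceNorm_eq_trace_abs : ∀ T, (traceNorm T : ℂ) = trace (opAbs T)
  traceNorm_nonneg : ∀ T, 0 ≤ traceNorm T
  traceNorm_eq_zero_iff : ∀ T, IsTraceClass T → (traceNorm T = 0 ↔ T = 0)
  traceNorm_add_le : ∀ S T, IsTraceClass S → IsTraceClass T →
    traceNorm (S + T) ≤ traceNorm S + traceNorm T
  traceNorm_smul : ∀ (c : ℂ) (T : H →L[ℂ] H), traceNorm (c • T) = ‖c‖ * traceNorm T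
  traceNorm_star : ∀ T, traceNorm (star T) = traceNorm T
  opNorm_le_traceNorm : ∀ T, IsTraceClass T → ‖T‖ ≤ traceNorm T
  traceNorm_mul_le : ∀ S T, IsTraceClass S → IsTraceClass T →
    traceNorm (S * T) ≤ traceNorm S * traceNorm T
  norm_trace_le : ∀ T, IsTraceClass T → ‖trace T‖ ≤ traceNorm T
  trace_of_positive : ∀ T, ContinuousLinearMap.IsPositive T → IsTraceClass T →
    trace T = (traceNorm T : ℂ)

/-- A density operator: a positive trace class operator of unit trace. -/
def TraceTheory.IsDensity {H : Type*} [NormedAddCommGroup H] [InnerProductSpace ℂ H]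
    [CompleteSpace H] (TT : TraceTheory H) (ρ : H →L[ℂ] H) : Prop :=
  ContinuousLinearMap.IsPositive ρ ∧ TT.IsTraceClass ρ ∧ TT.trace ρ = 1

/-- A realization of the Hilbert space tensor product `E ≅ H ⊗ K`: a bilinear map
`tmul` whose range has dense span and which multiplies inner products, together with
the induced tensor product of bounded operators, characterized on elementary tensors. -/
structure HilbertTensor (H K E : Type*)
    [NormedAddCommGroup H] [InnerProductSpace ℂ H] [CompleteSpace H]
    [NormedAddCommGroup K] [InnerProductSpace ℂ K] [CompleteSpace K]
    [NormedAddCommGroup E] [InnerProductSpace ℂ E] [CompleteSpace E] where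
  tmul : H →ₗ[ℂ] K →ₗ[ℂ] E
  inner_tmul : ∀ (x x' : H) (y y' : K),
    (inner ℂ (tmul x y) (tmul x' y') : ℂ) = (inner ℂ x x' : ℂ) * (inner ℂ y y' : ℂ)
  dense_span : Dense (↑(Submodule.span ℂ {z : E | ∃ x y, z = tmul x y}) : Set E)
  map : (H →L[ℂ] H) → (K →L[ℂ] K) → (E →L[ℂ] E)
  map_tmul : ∀ (S : H →L[ℂ] H) (T : K →L[ℂ] K) (x : H) (y : K),
    map S T (tmul x y) = tmul (S x) (T y)

section Defs

variable {H K E : Type*}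
  [NormedAddCommGroup H] [InnerProductSpace ℂ H] [CompleteSpace H]
  [NormedAddCommGroup K] [InnerProductSpace ℂ K] [CompleteSpace K]
  [NormedAddCommGroup E] [InnerProductSpace ℂ E] [CompleteSpace E]

/-- The elementary tensors `S ⊗ T` of trace class operators. -/
def ElemTensors (TH : TraceTheory H) (TK : TraceTheory K) (ht : HilbertTensor H K E) :
    Set (E →L[ℂ] E) :=
  {C | ∃ (S : H →L[ℂ] H) (T : K →L[ℂ] K),
    TH.IsTraceClass S ∧ TK.IsTraceClass T ∧ C = ht.map S T}

/-- The product states `ρ ⊗ σ` of density operators. -/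
def ProductStates (TH : TraceTheory H) (TK : TraceTheory K) (ht : HilbertTensor H K E) :
    Set (E →L[ℂ] E) :=
  {C | ∃ (ρ : H →L[ℂ] H) (σ : K →L[ℂ] K),
    TH.IsDensity ρ ∧ TK.IsDensity σ ∧ C = ht.map ρ σ}

/-- The products `π ⊗ ϖ` of pure states (rank-one projections). -/
def PureProductStates (ht : HilbertTensor H K E) : Set (E →L[ℂ] E) :=
  {C | ∃ (P : H →L[ℂ] H) (Q : K →L[ℂ] K),
    IsPureState P ∧ IsPureState Q ∧ C = ht.map P Q}

/-- Trace-norm closure of a set, inside the trace class. -/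
def tnClosure (TE : TraceTheory E) (s : Set (E →L[ℂ] E)) : Set (E →L[ℂ] E) :=
  {C | TE.IsTraceClass C ∧ ∀ ε > 0, ∃ D ∈ s, TE.traceNorm (C - D) < ε}

/-- Finite convex combinations of elements of a set of operators. -/
def ConvexCombos (s : Set (E →L[ℂ] E)) : Set (E →L[ℂ] E) :=
  {C | ∃ (n : ℕ) (p : Fin n → ℝ) (f : Fin n → E →L[ℂ] E),
    (∀ i, 0 ≤ p i) ∧ (∑ i, p i) = 1 ∧ (∀ i, f i ∈ s) ∧ C = ∑ i, (p i : ℂ) • f i}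

/-- Extreme points of a set of operators (with respect to real convex combinations). -/
def ExtremePoints (s : Set (E →L[ℂ] E)) : Set (E →L[ℂ] E) :=
  {x | x ∈ s ∧ ∀ y ∈ s, ∀ z ∈ s, ∀ t : ℝ, 0 < t → t < 1 →
    x = (t : ℂ) • y + ((1 - t : ℝ) : ℂ) • z → y = x ∧ z = x}

/-- A simple-tensor decomposition `C = Σₖ Sₖ ⊗ Tₖ` with `Σₖ ‖Sₖ‖₁‖Tₖ‖₁ < ∞`,
converging in trace norm. -/
def GenRep (TH : TraceTheory H) (TK : TraceTheory K) (TE : TraceTheory E)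
    (ht : HilbertTensor H K E) (C : E →L[ℂ] E)
    (S : ℕ → H →L[ℂ] H) (T : ℕ → K →L[ℂ] K) : Prop :=
  (∀ k, TH.IsTraceClass (S k)) ∧ (∀ k, TK.IsTraceClass (T k)) ∧
  Summable (fun k => TH.traceNorm (S k) * TK.traceNorm (T k)) ∧
  ∀ ε > 0, ∃ N : ℕ, ∀ n ≥ N,
    TE.traceNorm (C - ∑ k ∈ Finset.range n, ht.map (S k) (T k)) < ε

/-- The cross trace class `T(H) ⊗_π T(K)`, realized inside the trace class of `E = H ⊗ K`. -/
def IsCross (TH : TraceTheory H) (TK : TraceTheory K) (TE : TraceTheory E)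
    (ht : HilbertTensor H K E) (C : E →L[ℂ] E) : Prop :=
  TE.IsTraceClass C ∧ ∃ S T, GenRep TH TK TE ht C S T

/-- The projective norm `‖C‖_π` of a cross trace class operator. -/
def projNorm (TH : TraceTheory H) (TK : TraceTheory K) (TE : TraceTheory E)
    (ht : HilbertTensor H K E) (C : E →L[ℂ] E) : ℝ :=
  sInf {t | ∃ (S : ℕ → H →L[ℂ] H) (T : ℕ → K →L[ℂ] K), GenRep TH TK TE ht C S T ∧
    t = ∑' k, TH.traceNorm (S k) * TK.traceNorm (T k)}

/-- A standard decomposition `C = Σₖ rₖ (Xₖ ⊗ Yₖ)` with `rₖ ≥ 0`, `Σₖ rₖ < ∞` and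
`‖Xₖ‖₁‖Yₖ‖₁ = 1`, converging (absolutely) in trace norm. -/
def StdRep (TH : TraceTheory H) (TK : TraceTheory K) (TE : TraceTheory E)
    (ht : HilbertTensor H K E) (C : E →L[ℂ] E)
    (r : ℕ → ℝ) (X : ℕ → H →L[ℂ] H) (Y : ℕ → K →L[ℂ] K) : Prop :=
  (∀ k, 0 ≤ r k) ∧ Summable r ∧
  (∀ k, TH.IsTraceClass (X k)) ∧ (∀ k, TK.IsTraceClass (Y k)) ∧
  (∀ k, TH.traceNorm (X k) * TK.traceNorm (Y k) = 1) ∧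
  ∀ ε > 0, ∃ N : ℕ, ∀ n ≥ N,
    TE.traceNorm (C - ∑ k ∈ Finset.range n, (r k : ℂ) • ht.map (X k) (Y k)) < ε

/-- A Hermitian standard decomposition: a standard decomposition into selfadjoint
elementary tensors. -/
def HermStdRep (TH : TraceTheory H) (TK : TraceTheory K) (TE : TraceTheory E)
    (ht : HilbertTensor H K E) (C : E →L[ℂ] E)
    (r : ℕ → ℝ) (X : ℕ → H →L[ℂ] H) (Y : ℕ → K →L[ℂ] K) : Prop :=
  StdRep TH TK TE ht C r X Y ∧ (∀ k, IsSelfAdjoint (X k)) ∧ (∀ k, IsSelfAdjoint (Y k))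

/-- The Hermitian projective norm `‖C‖_{π,sa}`. -/
def hermProjNorm (TH : TraceTheory H) (TK : TraceTheory K) (TE : TraceTheory E)
    (ht : HilbertTensor H K E) (C : E →L[ℂ] E) : ℝ :=
  sInf {t | ∃ (r : ℕ → ℝ) (X : ℕ → H →L[ℂ] H) (Y : ℕ → K →L[ℂ] K),
    HermStdRep TH TK TE ht C r X Y ∧ t = ∑' k, r k}

/-- A signed decomposition `C = Σₖ tₖ (ρₖ ⊗ σₖ)` with real `tₖ`, `Σₖ |tₖ| < ∞` and
density operators `ρₖ, σₖ`, converging (absolutely) in trace norm. -/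
def SignedRep (TH : TraceTheory H) (TK : TraceTheory K) (TE : TraceTheory E)
    (ht : HilbertTensor H K E) (C : E →L[ℂ] E)
    (t : ℕ → ℝ) (ρ : ℕ → H →L[ℂ] H) (σ : ℕ → K →L[ℂ] K) : Prop :=
  Summable (fun k => |t k|) ∧ (∀ k, TH.IsDensity (ρ k)) ∧ (∀ k, TK.IsDensity (σ k)) ∧
  ∀ ε > 0, ∃ N : ℕ, ∀ n ≥ N,
    TE.traceNorm (C - ∑ k ∈ Finset.range n, (t k : ℂ) • ht.map (ρ k) (σ k)) < ε

/-- A separable state: an element of the trace-norm closed convex hull of the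
product states. -/
def IsSepState (TH : TraceTheory H) (TK : TraceTheory K) (TE : TraceTheory E)
    (ht : HilbertTensor H K E) (γ : E →L[ℂ] E) : Prop :=
  TE.IsTraceClass γ ∧
  ∀ ε > 0, ∃ C ∈ ConvexCombos (ProductStates TH TK ht), TE.traceNorm (γ - C) < ε

/-- A finite decomposition of `C` into elementary tensors of trace class operators. -/
def FinRep (TH : TraceTheory H) (TK : TraceTheory K) (ht : HilbertTensor H K E)
    (C : E →L[ℂ] E) (n : ℕ) (S : Fin n → H →L[ℂ] H) (T : Fin n → K →L[ℂ] K) : Prop :=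
  (∀ k, TH.IsTraceClass (S k)) ∧ (∀ k, TK.IsTraceClass (T k)) ∧
  C = ∑ k, ht.map (S k) (T k)

/-- The projective norm on the algebraic tensor product, via finite decompositions. -/
def finProjNorm (TH : TraceTheory H) (TK : TraceTheory K) (ht : HilbertTensor H K E)
    (C : E →L[ℂ] E) : ℝ :=
  sInf {t | ∃ (n : ℕ) (S : Fin n → H →L[ℂ] H) (T : Fin n → K →L[ℂ] K),
    FinRep TH TK ht C n S T ∧ t = ∑ k, TH.traceNorm (S k) * TK.traceNorm (T k)}

/-- The Hermitian projective norm on the algebraic tensor product, via finite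
decompositions into selfadjoint elementary tensors. -/
def finHermProjNorm (TH : TraceTheory H) (TK : TraceTheory K) (ht : HilbertTensor H K E)
    (C : E →L[ℂ] E) : ℝ :=
  sInf {t | ∃ (n : ℕ) (S : Fin n → H →L[ℂ] H) (T : Fin n → K →L[ℂ] K),
    FinRep TH TK ht C n S T ∧ (∀ k, IsSelfAdjoint (S k)) ∧ (∀ k, IsSelfAdjoint (T k)) ∧
    t = ∑ k, TH.traceNorm (S k) * TK.traceNorm (T k)}

end Defs

/-! Testing `S ⊗ T` against elementary tensors gives `⟪x', S x⟫⟪y', T y⟫ = ⟪x', X x⟫⟪y', Y y⟫`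
for all vectors. Fixing `y = y'` with `⟪y, T y⟫ ≠ 0` shows `S = c • X`, and then fixing `x = x'`
with `⟪x, X x⟫ ≠ 0` shows `Y = c • T` with the same `c ∈ ℂ`. Taking traces,
`c = tr S / tr X = ‖S‖₁ / ‖X‖₁` is real and positive since `S` and `X` are positive and nonzero. -/

open scoped InnerProductSpace

namespace ContinuousLinearMap

variable {H : Type*} [NormedAddCommGroup H] [InnerProductSpace ℂ H]

theorem exists_inner_apply_self_ne_zero {A : H →L[ℂ] H} (hA : A ≠ 0) :
    ∃ x : H, ⟪x, A x⟫_ℂ ≠ 0 := by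
  by_contra! h
  refine hA (coe_injective ((inner_map_self_eq_zero (A : H →ₗ[ℂ] H)).mp fun x => ?_))
  rw [← inner_conj_symm]
  simp [h x]

theorem eq_smul_of_inner_apply_mul_eq {A B : H →L[ℂ] H} {a b : ℂ} (ha : a ≠ 0)
    (h : ∀ x x' : H, ⟪x', A x⟫_ℂ * a = ⟪x', B x⟫_ℂ * b) : A = (b / a) • B := by
  ext x
  refine ext_inner_left ℂ fun x' => ?_
  rw [smul_apply, inner_smul_right, div_mul_eq_mul_div, eq_div_iff ha, h, mul_comm]

end ContinuousLinearMap

section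

variable {H K E : Type*}
  [NormedAddCommGroup H] [InnerProductSpace ℂ H] [CompleteSpace H]
  [NormedAddCommGroup K] [InnerProductSpace ℂ K] [CompleteSpace K]
  [NormedAddCommGroup E] [InnerProductSpace ℂ E] [CompleteSpace E]

namespace HilbertTensor

variable (ht : HilbertTensor H K E)

theorem inner_tmul_map_tmul (A : H →L[ℂ] H) (B : K →L[ℂ] K) (x x' : H) (y y' : K) :
    ⟪ht.tmul x' y', ht.map A B (ht.tmul x y)⟫_ℂ = ⟪x', A x⟫_ℂ * ⟪y', B y⟫_ℂ := by
  rw [ht.map_tmul, ht.inner_tmul]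

theorem map_smul_smul_inv (A : H →L[ℂ] H) (B : K →L[ℂ] K) {c : ℂ} (hc : c ≠ 0) :
    ht.map (c • A) (c⁻¹ • B) = ht.map A B := by
  refine ContinuousLinearMap.ext_on ht.dense_span ?_
  rintro _ ⟨x, y, rfl⟩
  simp only [ht.map_tmul, smul_apply, map_smul, LinearMap.smul_apply,
    smul_smul, inv_mul_cancel₀ hc, one_smul]

theorem exists_smul_of_map_eq_map {S X : H →L[ℂ] H} {T Y : K →L[ℂ] K}
    (h : ht.map S T = ht.map X Y) (hX : X ≠ 0) (hT : T ≠ 0) :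
    ∃ c : ℂ, S = c • X ∧ Y = c • T := by
  have hinner : ∀ x x' y y', ⟪x', S x⟫_ℂ * ⟪y', T y⟫_ℂ = ⟪x', X x⟫_ℂ * ⟪y', Y y⟫_ℂ :=
    fun x x' y y' => by rw [← ht.inner_tmul_map_tmul, ← ht.inner_tmul_map_tmul, h]
  obtain ⟨y₀, hy₀⟩ := ContinuousLinearMap.exists_inner_apply_self_ne_zero hT
  obtain ⟨x₀, hx₀⟩ := ContinuousLinearMap.exists_inner_apply_self_ne_zero hX
  have hSX := ContinuousLinearMap.eq_smul_of_inner_apply_mul_eq hy₀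
    fun x x' => hinner x x' y₀ y₀
  have hYT : Y = (⟪x₀, S x₀⟫_ℂ / ⟪x₀, X x₀⟫_ℂ) • T :=
    ContinuousLinearMap.eq_smul_of_inner_apply_mul_eq hx₀
      fun y y' => by linear_combination -hinner x₀ x₀ y y'
  refine ⟨_, hSX, ?_⟩
  rwa [hSX, smul_apply, inner_smul_right, mul_div_cancel_right₀ _ hx₀] at hYT

end HilbertTensor

namespace TraceTheory

variable (TT : TraceTheory H) {A B : H →L[ℂ] H}

theorem traceNorm_pos (hA : TT.IsTraceClass A) (hA0 : A ≠ 0) : 0 < TT.traceNorm A :=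
  (TT.traceNorm_nonneg A).lt_of_ne fun h => hA0 ((TT.traceNorm_eq_zero_iff A hA).mp h.symm)

theorem trace_ne_zero_of_isPositive (hA : A.IsPositive) (hA' : TT.IsTraceClass A)
    (hA0 : A ≠ 0) : TT.trace A ≠ 0 := by
  rw [TT.trace_of_positive A hA hA']
  exact_mod_cast (TT.traceNorm_pos hA' hA0).ne'

theorem eq_trace_div_trace_of_eq_smul {c : ℂ} (h : A = c • B) (hB : TT.trace B ≠ 0) :
    c = TT.trace A / TT.trace B := by
  rw [h, TT.trace_smul, mul_div_cancel_right₀ _ hB]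

variable {TT} in
theorem IsDensity.ne_zero (hA : TT.IsDensity A) : A ≠ 0 := by
  rintro rfl
  have h0 : TT.trace 0 = 0 := by simpa using TT.trace_smul 0 0
  exact one_ne_zero (hA.2.2.symm.trans h0)

end TraceTheory

namespace HilbertTensor

variable (TH : TraceTheory H) (TK : TraceTheory K) (ht : HilbertTensor H K E)
  {S X : H →L[ℂ] H} {T Y : K →L[ℂ] K}

theorem map_eq_map_iff (hS : S.IsPositive) (hX : X.IsPositive) (hT : T.IsPositive)
    (hS' : TH.IsTraceClass S) (hX' : TH.IsTraceClass X) (hT' : TK.IsTraceClass T)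
    (hS0 : S ≠ 0) (hX0 : X ≠ 0) (hT0 : T ≠ 0) :
    ht.map S T = ht.map X Y ↔
      ∃ r : ℝ, 0 < r ∧ S = (r : ℂ) • X ∧ T = ((r⁻¹ : ℝ) : ℂ) • Y ∧
        (r : ℂ) = TH.trace S / TH.trace X ∧ (r : ℂ) = TK.trace Y / TK.trace T := by
  constructor
  · intro h
    obtain ⟨c, hSX, hYT⟩ := ht.exists_smul_of_map_eq_map h hX0 hT0
    have htrX := TH.trace_ne_zero_of_isPositive hX hX' hX0
    have htrT := TK.trace_ne_zero_of_isPositive hT hT' hT0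
    have hc : c = TH.trace S / TH.trace X := TH.eq_trace_div_trace_of_eq_smul hSX htrX
    set r := TH.traceNorm S / TH.traceNorm X
    have hr : 0 < r := div_pos (TH.traceNorm_pos hS' hS0) (TH.traceNorm_pos hX' hX0)
    have hcr : c = r := by
      rw [hc, TH.trace_of_positive S hS hS', TH.trace_of_positive X hX hX', Complex.ofReal_div]
    subst hcr
    refine ⟨r, hr, hSX, ?_, hc, TK.eq_trace_div_trace_of_eq_smul hYT htrT⟩
    rw [hYT, smul_smul, ← Complex.ofReal_mul, inv_mul_cancel₀ hr.ne', Complex.ofReal_one,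
      one_smul]
  · rintro ⟨r, hr, rfl, rfl, -⟩
    rw [Complex.ofReal_inv]
    exact ht.map_smul_smul_inv X Y (Complex.ofReal_ne_zero.mpr hr.ne')

theorem map_eq_map_iff_of_isDensity {ρ τ : H →L[ℂ] H} {σ ω : K →L[ℂ] K}
    (hρ : TH.IsDensity ρ) (hτ : TH.IsDensity τ) (hσ : TK.IsDensity σ) :
    ht.map ρ σ = ht.map τ ω ↔ ρ = τ ∧ σ = ω := by
  constructor
  · intro h
    obtain ⟨r, -, hρτ, hσω, hr, -⟩ := (ht.map_eq_map_iff TH TK hρ.1 hτ.1 hσ.1 hρ.2.1 hτ.2.1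
      hσ.2.1 hρ.ne_zero hτ.ne_zero hσ.ne_zero).mp h
    rw [hρ.2.2, hτ.2.2, div_one, Complex.ofReal_eq_one] at hr
    subst hr
    simp only [inv_one, Complex.ofReal_one, one_smul] at hρτ hσω
    exact ⟨hρτ, hσω⟩
  · rintro ⟨rfl, rfl⟩
    rfl

end HilbertTensor

end

theorem stmt1_general {H K E : Type*}
    [NormedAddCommGroup H] [InnerProductSpace ℂ H] [CompleteSpace H]
    [NormedAddCommGroup K] [InnerProductSpace ℂ K] [CompleteSpace K]
    [NormedAddCommGroup E] [InnerProductSpace ℂ E] [CompleteSpace E]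
    (TH : TraceTheory H) (TK : TraceTheory K)
    (ht : HilbertTensor H K E)
    (S X : H →L[ℂ] H) (T Y : K →L[ℂ] K)
    (hS : ContinuousLinearMap.IsPositive S) (hX : ContinuousLinearMap.IsPositive X)
    (hT : ContinuousLinearMap.IsPositive T)
    (hS' : TH.IsTraceClass S) (hX' : TH.IsTraceClass X)
    (hT' : TK.IsTraceClass T)
    (hS0 : S ≠ 0) (hX0 : X ≠ 0) (hT0 : T ≠ 0) :
    (ht.map S T = ht.map X Y ↔
      ∃ r : ℝ, 0 < r ∧ S = (r : ℂ) • X ∧ T = ((r⁻¹ : ℝ) : ℂ) • Y ∧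
        (r : ℂ) = TH.trace S / TH.trace X ∧ (r : ℂ) = TK.trace Y / TK.trace T) ∧
    (∀ (ρ τ : H →L[ℂ] H) (σ ω : K →L[ℂ] K),
      TH.IsDensity ρ → TH.IsDensity τ → TK.IsDensity σ → TK.IsDensity ω →
      (ht.map ρ σ = ht.map τ ω ↔ ρ = τ ∧ σ = ω)) :=
  ⟨ht.map_eq_map_iff TH TK hS hX hT hS' hX' hT' hS0 hX0 hT0,
    fun _ _ _ _ hρ hτ hσ _ => ht.map_eq_map_iff_of_isDensity TH TK hρ hτ hσ⟩

theorem stmt1 {H K E : Type*}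
    [NormedAddCommGroup H] [InnerProductSpace ℂ H] [CompleteSpace H]
    [TopologicalSpace.SeparableSpace H]
    [NormedAddCommGroup K] [InnerProductSpace ℂ K] [CompleteSpace K]
    [TopologicalSpace.SeparableSpace K]
    [NormedAddCommGroup E] [InnerProductSpace ℂ E] [CompleteSpace E]
    (TH : TraceTheory H) (TK : TraceTheory K) (TE : TraceTheory E)
    (ht : HilbertTensor H K E)
    (S X : H →L[ℂ] H) (T Y : K →L[ℂ] K)
    (hS : ContinuousLinearMap.IsPositive S) (hX : ContinuousLinearMap.IsPositive X)
    (hT : ContinuousLinearMap.IsPositive T) (hY : ContinuousLinearMap.IsPositive Y)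
    (hS' : TH.IsTraceClass S) (hX' : TH.IsTraceClass X)
    (hT' : TK.IsTraceClass T) (hY' : TK.IsTraceClass Y)
    (hS0 : S ≠ 0) (hX0 : X ≠ 0) (hT0 : T ≠ 0) (hY0 : Y ≠ 0) :
    (ht.map S T = ht.map X Y ↔
      ∃ r : ℝ, 0 < r ∧ S = (r : ℂ) • X ∧ T = ((r⁻¹ : ℝ) : ℂ) • Y ∧
        (r : ℂ) = TH.trace S / TH.trace X ∧ (r : ℂ) = TK.trace Y / TK.trace T) ∧
    (∀ (ρ τ : H →L[ℂ] H) (σ ω : K →L[ℂ] K),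
      TH.IsDensity ρ → TH.IsDensity τ → TK.IsDensity σ → TK.IsDensity ω →
      (ht.map ρ σ = ht.map τ ω ↔ ρ = τ ∧ σ = ω)) :=
  stmt1_general TH TK ht S X T Y hS hX hT hS' hX' hT' hS0 hX0 hT0
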